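/- arXiv:1609.05840 — 5 statements merged into one kernel-verified Lean document; each statement's English description precedes it below -/
import Mathlib

section
/- The system (A,C,𝒜) is constructible if and only if the dual system (Aᵀ, Cᵀ, 𝒜ʳ) is 0-controllable. -/
open Matrix Filter

/-- An automaton `𝒜 = (M, s)` with `N` nodes: transition matrix `M ∈ {0,1}^{N×N}`
and vector of node labels `s ∈ {0,1}^N`. -/
structure Automaton (N : ℕ) where
  M : Matrix (Fin N) (Fin N) Bool
  s : Fin N → Bool

/-- `σ ∈ ℒ(𝒜)`: the data loss signal `σ` is admissible with respect to `𝒜`. -/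
def Automaton.Admissible {N : ℕ} (𝒜 : Automaton N) (σ : ℕ → Bool) : Prop :=
  ∃ v : ℕ → Fin N, ∀ t : ℕ, 𝒜.M (v t) (v (t + 1)) = true ∧ σ t = 𝒜.s (v t)

/-- A finite word of length `r` generated by `𝒜` (only the first `r` letters of `w` matter). -/
def Automaton.AdmissibleWord {N : ℕ} (𝒜 : Automaton N) (r : ℕ) (w : ℕ → Bool) : Prop :=
  ∃ v : ℕ → Fin N, (∀ t : ℕ, t + 1 < r → 𝒜.M (v t) (v (t + 1)) = true) ∧
    ∀ t : ℕ, t < r → w t = 𝒜.s (v t)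

/-- The reverse automaton `𝒜ʳ = (Mᵀ, s)`. -/
def Automaton.rev {N : ℕ} (𝒜 : Automaton N) : Automaton N :=
  ⟨𝒜.M.transpose, 𝒜.s⟩

/-- Observability of the system `(A, C, 𝒜)`. -/
def Observable {N n p : ℕ} (A : Matrix (Fin n) (Fin n) ℝ) (C : Matrix (Fin p) (Fin n) ℝ)
    (𝒜 : Automaton N) : Prop :=
  ∀ σ : ℕ → Bool, 𝒜.Admissible σ → ∀ x₀ : Fin n → ℝ,
    (∀ t : ℕ, σ t = true → (C * A ^ t).mulVec x₀ = 0) → x₀ = 0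

/-- Practical observability of the system `(A, C, 𝒜)`. -/
def PracticallyObservable {N n p : ℕ} (A : Matrix (Fin n) (Fin n) ℝ)
    (C : Matrix (Fin p) (Fin n) ℝ) (𝒜 : Automaton N) : Prop :=
  ∃ T : ℕ, ∀ σ : ℕ → Bool, 𝒜.Admissible σ → ∀ x₀ : Fin n → ℝ,
    (∀ t : ℕ, t ≤ T → σ t = true → (C * A ^ t).mulVec x₀ = 0) → x₀ = 0

/-- Constructibility of the system `(A, C, 𝒜)`. -/
def Constructible {N n p : ℕ} (A : Matrix (Fin n) (Fin n) ℝ) (C : Matrix (Fin p) (Fin n) ℝ)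
    (𝒜 : Automaton N) : Prop :=
  ∀ σ : ℕ → Bool, 𝒜.Admissible σ → ∃ T : ℕ, ∀ x₀ : Fin n → ℝ,
    (∀ t : ℕ, t ≤ T → σ t = true → (C * A ^ t).mulVec x₀ = 0) → (A ^ T).mulVec x₀ = 0

/-- Practical constructibility of the system `(A, C, 𝒜)`. -/
def PracticallyConstructible {N n p : ℕ} (A : Matrix (Fin n) (Fin n) ℝ)
    (C : Matrix (Fin p) (Fin n) ℝ) (𝒜 : Automaton N) : Prop :=
  ∃ T : ℕ, ∀ σ : ℕ → Bool, 𝒜.Admissible σ → ∀ x₀ : Fin n → ℝ,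
    (∀ t : ℕ, t ≤ T → σ t = true → (C * A ^ t).mulVec x₀ = 0) → (A ^ T).mulVec x₀ = 0

/-- Detectability of the system `(A, C, 𝒜)`. -/
def Detectable {N n p : ℕ} (A : Matrix (Fin n) (Fin n) ℝ) (C : Matrix (Fin p) (Fin n) ℝ)
    (𝒜 : Automaton N) : Prop :=
  ∀ σ : ℕ → Bool, 𝒜.Admissible σ → ∀ x₀ : Fin n → ℝ,
    (∀ t : ℕ, σ t = true → (C * A ^ t).mulVec x₀ = 0) →
      Tendsto (fun t : ℕ => (A ^ t).mulVec x₀) atTop (nhds 0)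

/-- The observability matrix `O_σ(t) = [σ(0)C; σ(1)CA; ...; σ(t−1)CA^{t−1}]`
(blocks stacked vertically, block `i` is row-block `i`). -/
def obsMat {n p : ℕ} (A : Matrix (Fin n) (Fin n) ℝ) (C : Matrix (Fin p) (Fin n) ℝ)
    (σ : ℕ → Bool) (t : ℕ) : Matrix (Fin t × Fin p) (Fin n) ℝ :=
  fun ij k => if σ (ij.1 : ℕ) then (C * A ^ (ij.1 : ℕ)) ij.2 k else 0

/-- State trajectory of the system `x(t+1) = A x(t) + σ(t) B u(t)`. -/
def traj {n m : ℕ} (A : Matrix (Fin n) (Fin n) ℝ) (B : Matrix (Fin n) (Fin m) ℝ)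
    (σ : ℕ → Bool) (u : ℕ → Fin m → ℝ) (x₀ : Fin n → ℝ) : ℕ → Fin n → ℝ
  | 0 => x₀
  | t + 1 => A.mulVec (traj A B σ u x₀ t) + if σ t then B.mulVec (u t) else 0

/-- Controllability of the system `(A, B, 𝒜)`. -/
def Controllable {N n m : ℕ} (A : Matrix (Fin n) (Fin n) ℝ) (B : Matrix (Fin n) (Fin m) ℝ)
    (𝒜 : Automaton N) : Prop :=
  ∀ σ : ℕ → Bool, 𝒜.Admissible σ → ∀ x₀ xf : Fin n → ℝ,
    ∃ u : ℕ → Fin m → ℝ, ∃ T : ℕ, traj A B σ u x₀ T = xf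

/-- Reachability of the system `(A, B, 𝒜)`. -/
def Reachable {N n m : ℕ} (A : Matrix (Fin n) (Fin n) ℝ) (B : Matrix (Fin n) (Fin m) ℝ)
    (𝒜 : Automaton N) : Prop :=
  ∀ σ : ℕ → Bool, 𝒜.Admissible σ → ∀ xf : Fin n → ℝ,
    ∃ u : ℕ → Fin m → ℝ, ∃ T : ℕ, traj A B σ u 0 T = xf

/-- 0-controllability of the system `(A, B, 𝒜)`. -/
def ZeroControllable {N n m : ℕ} (A : Matrix (Fin n) (Fin n) ℝ) (B : Matrix (Fin n) (Fin m) ℝ)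
    (𝒜 : Automaton N) : Prop :=
  ∀ σ : ℕ → Bool, 𝒜.Admissible σ → ∀ x₀ : Fin n → ℝ,
    ∃ u : ℕ → Fin m → ℝ, ∃ T : ℕ, traj A B σ u x₀ T = 0

/-- Stabilizability of the system `(A, B, 𝒜)`. -/
def Stabilizable {N n m : ℕ} (A : Matrix (Fin n) (Fin n) ℝ) (B : Matrix (Fin n) (Fin m) ℝ)
    (𝒜 : Automaton N) : Prop :=
  ∀ σ : ℕ → Bool, 𝒜.Admissible σ → ∀ x₀ : Fin n → ℝ,
    ∃ u : ℕ → Fin m → ℝ, Tendsto (fun t : ℕ => traj A B σ u x₀ t) atTop (nhds 0)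

/-- Practical controllability of the system `(A, B, 𝒜)`. -/
def PracticallyControllable {N n m : ℕ} (A : Matrix (Fin n) (Fin n) ℝ)
    (B : Matrix (Fin n) (Fin m) ℝ) (𝒜 : Automaton N) : Prop :=
  ∃ T : ℕ, ∀ σ : ℕ → Bool, 𝒜.Admissible σ → ∀ x₀ xf : Fin n → ℝ,
    ∃ u : ℕ → Fin m → ℝ, ∃ t : ℕ, t ≤ T ∧ traj A B σ u x₀ t = xf

/-- Practical reachability of the system `(A, B, 𝒜)`. -/
def PracticallyReachable {N n m : ℕ} (A : Matrix (Fin n) (Fin n) ℝ)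
    (B : Matrix (Fin n) (Fin m) ℝ) (𝒜 : Automaton N) : Prop :=
  ∃ T : ℕ, ∀ σ : ℕ → Bool, 𝒜.Admissible σ → ∀ xf : Fin n → ℝ,
    ∃ u : ℕ → Fin m → ℝ, ∃ t : ℕ, t ≤ T ∧ traj A B σ u 0 t = xf

/-- Practical 0-controllability of the system `(A, B, 𝒜)`. -/
def PracticallyZeroControllable {N n m : ℕ} (A : Matrix (Fin n) (Fin n) ℝ)
    (B : Matrix (Fin n) (Fin m) ℝ) (𝒜 : Automaton N) : Prop :=
  ∃ T : ℕ, ∀ σ : ℕ → Bool, 𝒜.Admissible σ → ∀ x₀ : Fin n → ℝ,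
    ∃ u : ℕ → Fin m → ℝ, ∃ t : ℕ, t ≤ T ∧ traj A B σ u x₀ t = 0

/-- The reachability matrix `C_σ(t) = [σ(t−1)B, σ(t−2)AB, ..., σ(0)A^{t−1}B]`
(block-column `i` is `σ(t−1−i) Aⁱ B`). -/
def reachMat {n m : ℕ} (A : Matrix (Fin n) (Fin n) ℝ) (B : Matrix (Fin n) (Fin m) ℝ)
    (σ : ℕ → Bool) (t : ℕ) : Matrix (Fin n) (Fin t × Fin m) ℝ :=
  fun k ij => if σ (t - 1 - (ij.1 : ℕ)) then (A ^ (ij.1 : ℕ) * B) k ij.2 else 0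

/-- State trajectory of the system with varying delays
`x(t+1) = A x(t) + Σ_{t' ≤ t, t' + d(t') = t} B u(t')`. -/
def delayTraj {n m : ℕ} (A : Matrix (Fin n) (Fin n) ℝ) (B : Matrix (Fin n) (Fin m) ℝ)
    (d : ℕ → ℕ) (u : ℕ → Fin m → ℝ) (x₀ : Fin n → ℝ) : ℕ → Fin n → ℝ
  | 0 => x₀
  | t + 1 => A.mulVec (delayTraj A B d u x₀ t) +
      ∑ t' ∈ Finset.range (t + 1), if t' + d t' = t then B.mulVec (u t') else 0

/-- Controllability of the system with varying delays `(A, B, 𝒟)`. -/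
def DelayControllable {n m : ℕ} (A : Matrix (Fin n) (Fin n) ℝ) (B : Matrix (Fin n) (Fin m) ℝ)
    (𝒟 : Finset ℕ) : Prop :=
  ∀ d : ℕ → ℕ, (∀ t : ℕ, d t ∈ 𝒟) → ∀ x₀ xf : Fin n → ℝ,
    ∃ u : ℕ → Fin m → ℝ, ∃ T : ℕ, delayTraj A B d u x₀ T = xf

/-- The controllability matrix `C̄_d(t)` of a system with varying delays: its `i`-th
block column (here indexed by `j = i - 1 : Fin t`) is `A^{t−i−d(i−1)} B` when
`i + d(i−1) ≤ t`, and the zero block otherwise. -/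
def delayCtrbMat {n m : ℕ} (A : Matrix (Fin n) (Fin n) ℝ) (B : Matrix (Fin n) (Fin m) ℝ)
    (d : ℕ → ℕ) (t : ℕ) : Matrix (Fin n) (Fin t × Fin m) ℝ :=
  fun k jl => if (jl.1 : ℕ) + 1 + d (jl.1 : ℕ) ≤ t
    then (A ^ (t - ((jl.1 : ℕ) + 1) - d (jl.1 : ℕ)) * B) k jl.2 else 0

-- The actuation signal `τ_d` of a delay signal `d`: `τ_d(t) = 1` iff there is
-- `t'` with `t' + d(t') = t`.
open Classical in
noncomputable def actuation (d : ℕ → ℕ) (t : ℕ) : Bool :=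
  if ∃ t' : ℕ, t' + d t' = t then true else false


lemma traj_eq {n m : ℕ} (A : Matrix (Fin n) (Fin n) ℝ) (B : Matrix (Fin n) (Fin m) ℝ)
    (σ : ℕ → Bool) (u : ℕ → Fin m → ℝ) (x₀ : Fin n → ℝ) (T : ℕ) :
    traj A B σ u x₀ T = (A ^ T).mulVec x₀ +
      ∑ t ∈ Finset.range T, (if σ t then (A ^ (T - 1 - t)).mulVec (B.mulVec (u t)) else 0) := by
  induction T with
  | zero => simp [traj]
  | succ T ih =>
    show A.mulVec (traj A B σ u x₀ T) + _ = _
    rw [ih, Matrix.mulVec_add, Finset.sum_range_succ]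
    have h1 : A.mulVec ((A ^ T).mulVec x₀) = (A ^ (T+1)).mulVec x₀ := by
      rw [Matrix.mulVec_mulVec, ← pow_succ']
    have h2 : A.mulVec (∑ t ∈ Finset.range T,
        (if σ t then (A ^ (T - 1 - t)).mulVec (B.mulVec (u t)) else 0)) =
        ∑ t ∈ Finset.range T, (if σ t then (A ^ (T + 1 - 1 - t)).mulVec (B.mulVec (u t)) else 0) := by
      have := map_sum A.mulVecLin
        (fun t => (if σ t then (A ^ (T - 1 - t)).mulVec (B.mulVec (u t)) else 0)) (Finset.range T)
      simp only [Matrix.mulVecLin_apply] at this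
      rw [this]
      refine Finset.sum_congr rfl fun t ht => ?_
      rcases Finset.mem_range.mp ht with h
      by_cases hσ : σ t
      · simp only [if_pos hσ, Matrix.mulVec_mulVec]
        rw [← Matrix.mul_assoc, ← pow_succ']
        have he : T + 1 - 1 - t = T - 1 - t + 1 := by omega
        rw [he]
      · simp [if_neg hσ]
    rw [h1, h2]
    have h3 : (if σ T then B.mulVec (u T) else 0) =
        (if σ T then (A ^ (T + 1 - 1 - T)).mulVec (B.mulVec (u T)) else 0) := by
      simp
    rw [h3]; abel


lemma sum_dotProduct' {ι : Type*} (s : Finset ι) {n : ℕ} (f : ι → Fin n → ℝ) (z : Fin n → ℝ) :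
    (∑ t ∈ s, f t) ⬝ᵥ z = ∑ t ∈ s, f t ⬝ᵥ z := by
  simp only [dotProduct, Finset.sum_apply, Finset.sum_mul]
  rw [Finset.sum_comm]

lemma exists_matrix_factor {a q nn : Type*} [Fintype a] [DecidableEq a] [Fintype q]
    [Fintype nn] [DecidableEq nn] (M : Matrix a nn ℝ)
    (P : Matrix q nn ℝ) (h : ∀ x, M.mulVec x = 0 → P.mulVec x = 0) :
    ∃ H : Matrix q a ℝ, P = H * M := by
  set f := M.mulVecLin with hf
  set g := P.mulVecLin with hg
  have hk : LinearMap.ker f ≤ LinearMap.ker g := by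
    intro x hx
    simp only [LinearMap.mem_ker, hf, hg, Matrix.mulVecLin_apply] at *
    exact h x hx
  let g' : ((nn → ℝ) ⧸ LinearMap.ker f) →ₗ[ℝ] (q → ℝ) := (LinearMap.ker f).liftQ g hk
  let e := f.quotKerEquivRange
  let h0 : LinearMap.range f →ₗ[ℝ] (q → ℝ) := g'.comp (e.symm : _ →ₗ[ℝ] _)
  obtain ⟨G, hG⟩ := h0.exists_extend
  refine ⟨LinearMap.toMatrix' G, ?_⟩
  have key : ∀ x, P.mulVec x = G (M.mulVec x) := by
    intro x
    have hx : f x ∈ LinearMap.range f := LinearMap.mem_range_self f x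
    have h1 : G (f x) = h0 ⟨f x, hx⟩ := by
      have := congrArg (fun (φ : _ →ₗ[ℝ] _) => φ ⟨f x, hx⟩) hG
      simpa using this
    have h2 : e (Submodule.Quotient.mk x) = ⟨f x, hx⟩ := by
      apply Subtype.ext
      simp [e, LinearMap.quotKerEquivRange_apply_mk]
    have h3 : h0 ⟨f x, hx⟩ = g' (Submodule.Quotient.mk x) := by
      simp [h0, ← h2]
    have h4 : g' (Submodule.Quotient.mk x) = g x := by
      simp [g', Submodule.liftQ_apply]
    calc P.mulVec x = g x := rfl
    _ = G (f x) := by rw [h1, h3, h4]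
    _ = G (M.mulVec x) := rfl
  apply Matrix.ext
  have : ∀ x, P.mulVec x = (LinearMap.toMatrix' G * M).mulVec x := by
    intro x
    rw [key, ← Matrix.mulVec_mulVec,
      ← Matrix.toLin'_apply (LinearMap.toMatrix' G), Matrix.toLin'_toMatrix']
  intro i j
  have := congrFun (this (Pi.single j 1)) i
  simpa [Matrix.mulVec_single] using this

lemma exists_rev_admissible {N : ℕ} (𝒜 : Automaton N) (σ : ℕ → Bool) (v : ℕ → Fin N)
    (hM : ∀ t, 𝒜.M (v (t + 1)) (v t) = true) (hs : ∀ t, σ t = 𝒜.s (v t)) :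
    ∃ σ' : ℕ → Bool, 𝒜.Admissible σ' ∧ ∀ r : ℕ, ∃ k, r ≤ k ∧ ∀ s ≤ r, σ' s = σ (k - s) := by
  obtain ⟨U, hU⟩ := Filter.exists_ultrafilter_le (Filter.atTop : Filter ℕ)
  have hval : ∀ s : ℕ, ∃ a : Fin N, {k | v (k - s) = a} ∈ U := by
    intro s
    have h1 : (⋃ a ∈ (Set.univ : Set (Fin N)), {k | v (k - s) = a}) ∈ U := by
      have h2 : (⋃ a ∈ (Set.univ : Set (Fin N)), {k | v (k - s) = a}) = Set.univ := by
        ext k; simp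
      rw [h2]; exact Filter.univ_mem
    obtain ⟨a, -, ha⟩ := (Ultrafilter.finite_biUnion_mem_iff Set.finite_univ).mp h1
    exact ⟨a, ha⟩
  choose w hw using hval
  have hatTop : ∀ m : ℕ, {k | m ≤ k} ∈ U := fun m => hU (Filter.mem_atTop m)
  refine ⟨fun s => 𝒜.s (w s), ⟨w, fun t => ⟨?_, rfl⟩⟩, ?_⟩
  · -- edge
    have hmem : ({k | v (k - t) = w t} ∩ ({k | v (k - (t+1)) = w (t+1)} ∩ {k | t + 1 ≤ k})) ∈ U :=
      Filter.inter_mem (hw t) (Filter.inter_mem (hw (t+1)) (hatTop (t+1)))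
    obtain ⟨k, h1, h2, h3⟩ := Filter.nonempty_of_mem hmem
    have he : k - t = (k - (t+1)) + 1 := by
      simp only [Set.mem_setOf_eq] at h3; omega
    have := hM (k - (t+1))
    rw [← he] at this
    simp only [Set.mem_setOf_eq] at h1 h2
    rwa [h1, h2] at this
  · -- matching windows
    intro r
    have hmem : ({k | r ≤ k} ∩ ⋂ s ∈ Finset.range (r+1), {k | v (k - s) = w s}) ∈ U := by
      refine Filter.inter_mem (hatTop r) ?_
      exact (Filter.biInter_finset_mem _).mpr fun s _ => hw s
    obtain ⟨k, h1, h2⟩ := Filter.nonempty_of_mem hmem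
    simp only [Set.mem_setOf_eq, Set.mem_iInter] at h1 h2
    refine ⟨k, h1, fun s hsr => ?_⟩
    have := h2 s (Finset.mem_range.mpr (by omega))
    rw [hs (k - s), this]

/-- `(A,C,𝒜)` is constructible iff the dual system `(Aᵀ, Cᵀ, 𝒜ʳ)` is 0-controllable. -/
theorem constructible_iff_dual_zeroControllable {N n p : ℕ} (A : Matrix (Fin n) (Fin n) ℝ)
    (C : Matrix (Fin p) (Fin n) ℝ) (𝒜 : Automaton N) :
    Constructible A C 𝒜 ↔ ZeroControllable A.transpose C.transpose 𝒜.rev := by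
  constructor
  · -- Constructible → dual 0-controllable
    intro hc σ hσ x₀
    obtain ⟨v, hv⟩ := hσ
    have hM : ∀ t, 𝒜.M (v (t + 1)) (v t) = true := fun t => by
      have := (hv t).1
      simpa [Automaton.rev, Matrix.transpose_apply] using this
    have hs : ∀ t, σ t = 𝒜.s (v t) := fun t => (hv t).2
    obtain ⟨σ', hadm, hmatch⟩ := exists_rev_admissible 𝒜 σ v hM hs
    obtain ⟨T, hT⟩ := hc σ' hadm
    obtain ⟨k, hkT, hm⟩ := hmatch T
    have hker : ∀ z : Fin n → ℝ,
        (∀ t : ℕ, t < k + 1 → σ t = true → (C * A ^ (k - t)).mulVec z = 0) →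
        (A ^ (k + 1)).mulVec z = 0 := by
      intro z hz
      have h1 : (A ^ T).mulVec z = 0 := by
        apply hT z
        intro s hsT hσ's
        have h2 : σ (k - s) = true := by rw [← hm s hsT]; exact hσ's
        have h3 := hz (k - s) (by omega) h2
        have h4 : k - (k - s) = s := by omega
        rwa [h4] at h3
      have h5 : A ^ (k + 1) = A ^ (k + 1 - T) * A ^ T := by
        rw [← pow_add]; congr 1; omega
      rw [h5, ← Matrix.mulVec_mulVec, h1, Matrix.mulVec_zero]
    set Mat : Matrix (Fin (k+1) × Fin p) (Fin n) ℝ :=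
      fun ij l => if σ (ij.1 : ℕ) then (C * A ^ (k - (ij.1 : ℕ))) ij.2 l else 0 with hMatdef
    have hMatmul : ∀ z : Fin n → ℝ, ∀ ij : Fin (k+1) × Fin p,
        Mat.mulVec z ij =
          if σ (ij.1 : ℕ) then ((C * A ^ (k - (ij.1 : ℕ))).mulVec z) ij.2 else 0 := by
      intro z ij
      by_cases hσt : σ (ij.1 : ℕ) <;>
        simp [Mat, Matrix.mulVec, dotProduct, hσt]
    have hker' : ∀ z, Mat.mulVec z = 0 → (A ^ (k+1)).mulVec z = 0 := by
      intro z hz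
      apply hker
      intro t ht hσt
      funext j
      have h6 := congrFun hz (⟨t, ht⟩, j)
      rw [hMatmul] at h6
      simpa [hσt] using h6
    obtain ⟨H, hH⟩ := exists_matrix_factor Mat (A ^ (k+1)) hker'
    set wv : Fin (k+1) × Fin p → ℝ := Hᵀ.mulVec x₀ with hwv
    refine ⟨fun t j => if h : t < k + 1 then -(wv (⟨t, h⟩, j)) else 0, k + 1, ?_⟩
    rw [traj_eq]
    have hx : (Aᵀ ^ (k+1)).mulVec x₀ = Matᵀ.mulVec wv := by
      rw [← Matrix.transpose_pow, hH, Matrix.transpose_mul, ← Matrix.mulVec_mulVec]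
    have hsum : (∑ t ∈ Finset.range (k+1), if σ t then (Aᵀ ^ (k + 1 - 1 - t)).mulVec
        (Cᵀ.mulVec (fun j => if h : t < k + 1 then -(wv (⟨t, h⟩, j)) else 0)) else 0)
        = -(Matᵀ.mulVec wv) := by
      funext l
      rw [← Fin.sum_univ_eq_sum_range (fun t => if σ t then (Aᵀ ^ (k + 1 - 1 - t)).mulVec
        (Cᵀ.mulVec (fun j => if h : t < k + 1 then -(wv (⟨t, h⟩, j)) else 0)) else 0) (k+1)]
      rw [Finset.sum_apply]
      have hrhs : (-(Matᵀ.mulVec wv)) l =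
          ∑ t : Fin (k+1), -(∑ j : Fin p, Mat (t, j) l * wv (t, j)) := by
        simp only [Pi.neg_apply, Matrix.mulVec, dotProduct, Matrix.transpose_apply]
        rw [Fintype.sum_prod_type]
        rw [← Finset.sum_neg_distrib]
      rw [hrhs]
      refine Finset.sum_congr rfl fun t _ => ?_
      by_cases hσt : σ (t : ℕ)
      · have he : k + 1 - 1 - (t : ℕ) = k - (t : ℕ) := by omega
        rw [if_pos hσt, he]
        have hterm : (Aᵀ ^ (k - (t : ℕ))).mulVec (Cᵀ.mulVec
            (fun j => if h : (t : ℕ) < k + 1 then -(wv (⟨(t : ℕ), h⟩, j)) else 0)) =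
            ((C * A ^ (k - (t : ℕ)))ᵀ).mulVec (fun j => -(wv (t, j))) := by
          have harg : (fun j => if h : (t : ℕ) < k + 1 then -(wv (⟨(t : ℕ), h⟩, j)) else 0) =
              (fun j => -(wv (t, j))) := by
            funext j
            rw [dif_pos t.isLt]
          rw [harg, Matrix.mulVec_mulVec, Matrix.transpose_mul, ← Matrix.transpose_pow]
        rw [hterm]
        simp only [Matrix.mulVec, dotProduct, Matrix.transpose_apply]
        rw [← Finset.sum_neg_distrib]
        refine Finset.sum_congr rfl fun j _ => ?_
        simp [Mat, hσt, mul_neg]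
      · rw [if_neg hσt]
        simp only [Pi.zero_apply]
        have : ∀ j : Fin p, Mat (t, j) l * wv (t, j) = 0 := by
          intro j; simp [Mat, hσt]
        rw [Finset.sum_congr rfl fun j _ => this j]
        simp
    rw [hx, hsum]
    simp
  · -- dual 0-controllable → Constructible
    intro hz σ' hσ'
    obtain ⟨vw, hvw⟩ := hσ'
    have hM : ∀ t, (𝒜.rev).M (vw (t + 1)) (vw t) = true := fun t => by
      simpa [Automaton.rev, Matrix.transpose_apply] using (hvw t).1
    have hs : ∀ t, σ' t = (𝒜.rev).s (vw t) := fun t => (hvw t).2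
    obtain ⟨σ, hadm, hmatch⟩ := exists_rev_admissible 𝒜.rev σ' vw hM hs
    have key : ∀ x₀ : Fin n → ℝ, ∃ T : ℕ, ∀ z : Fin n → ℝ,
        (∀ t, t < T → σ t = true → (C * A ^ (T - 1 - t)).mulVec z = 0) →
        x₀ ⬝ᵥ (A ^ T).mulVec z = 0 := by
      intro x₀
      obtain ⟨u, T, hu⟩ := hz σ hadm x₀
      refine ⟨T, fun z hzc => ?_⟩
      have h0 := congrArg (fun y => y ⬝ᵥ z) hu
      rw [traj_eq] at h0
      simp only [zero_dotProduct, add_dotProduct] at h0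
      have h1 : (Aᵀ ^ T).mulVec x₀ ⬝ᵥ z = x₀ ⬝ᵥ (A ^ T).mulVec z := by
        rw [← Matrix.transpose_pow, Matrix.mulVec_transpose, ← Matrix.dotProduct_mulVec]
      have h2 : (∑ t ∈ Finset.range T,
          if σ t then (Aᵀ ^ (T - 1 - t)).mulVec (Cᵀ.mulVec (u t)) else 0) ⬝ᵥ z = 0 := by
        rw [sum_dotProduct']
        apply Finset.sum_eq_zero
        intro t ht
        by_cases hσt : σ t
        · rw [if_pos hσt, Matrix.mulVec_mulVec, ← Matrix.transpose_pow, ← Matrix.transpose_mul,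
            Matrix.mulVec_transpose, ← Matrix.dotProduct_mulVec,
            hzc t (Finset.mem_range.mp ht) hσt, dotProduct_zero]
        · rw [if_neg hσt, zero_dotProduct]
      rw [h1, h2] at h0
      linarith
    have keyall : ∀ x₀ : Fin n → ℝ, ∃ T : ℕ, ∀ T', T ≤ T' → ∀ z : Fin n → ℝ,
        (∀ t, t < T' → σ t = true → (C * A ^ (T' - 1 - t)).mulVec z = 0) →
        x₀ ⬝ᵥ (A ^ T').mulVec z = 0 := by
      intro x₀
      obtain ⟨T, hT⟩ := key x₀
      refine ⟨T, ?_⟩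
      intro T' hTT'
      induction T' , hTT' using Nat.le_induction with
      | base => exact hT
      | succ T' hTT' ih =>
        intro z hzc
        have h3 := ih (A.mulVec z) (fun t ht hσt => ?_)
        · rw [Matrix.mulVec_mulVec, ← pow_succ] at h3
          exact h3
        · rw [Matrix.mulVec_mulVec, Matrix.mul_assoc, ← pow_succ]
          have he : T' - 1 - t + 1 = T' + 1 - 1 - t := by omega
          rw [he]
          exact hzc t (by omega) hσt
    choose Tb hTb using fun i : Fin n => keyall (Pi.single i 1)
    set Ts := Finset.univ.sup Tb with hTs
    have W : ∀ z : Fin n → ℝ,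
        (∀ t, t < Ts → σ t = true → (C * A ^ (Ts - 1 - t)).mulVec z = 0) →
        (A ^ Ts).mulVec z = 0 := by
      intro z hzc
      funext i
      have h4 := hTb i Ts (Finset.le_sup (Finset.mem_univ i)) z hzc
      simpa [single_dotProduct] using h4
    obtain ⟨k, hk, hm⟩ := hmatch (Ts - 1)
    refine ⟨k + 1, fun x₀ hx => ?_⟩
    have hTsk : Ts ≤ k + 1 := by
      rcases Nat.eq_zero_or_pos Ts with h | h
      · omega
      · omega
    have hy : (A ^ Ts).mulVec ((A ^ (k + 1 - Ts)).mulVec x₀) = 0 := by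
      apply W
      intro t ht hσt
      have hs' : σ' (k - t) = true := by rw [← hm t (by omega)]; exact hσt
      rw [Matrix.mulVec_mulVec, Matrix.mul_assoc, ← pow_add]
      have he : Ts - 1 - t + (k + 1 - Ts) = k - t := by omega
      rw [he]
      exact hx (k - t) (by omega) hs'
    rw [Matrix.mulVec_mulVec, ← pow_add] at hy
    have hfin : Ts + (k + 1 - Ts) = k + 1 := by omega
    rwa [hfin] at hy
end

section
/- The system (A,B,𝒜) is practically reachable if and only if it is reachable; it is practically controllable if and only if it is controllable; and it is practically 0-controllable if and only if it is 0-controllable. -/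
open Matrix Filter

namespace PCaux

variable {n m : ℕ} (A : Matrix (Fin n) (Fin n) ℝ) (B : Matrix (Fin n) (Fin m) ℝ)

lemma traj_congr (σ σ' : ℕ → Bool) (u : ℕ → Fin m → ℝ) (x₀ : Fin n → ℝ) :
    ∀ t : ℕ, (∀ i, i < t → σ i = σ' i) → traj A B σ u x₀ t = traj A B σ' u x₀ t
  | 0, _ => rfl
  | t+1, h => by
    simp only [traj]
    rw [traj_congr σ σ' u x₀ t (fun i hi => h i (by omega)), h t (by omega)]

lemma traj_decomp (σ : ℕ → Bool) (u : ℕ → Fin m → ℝ) (x₀ : Fin n → ℝ) :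
    ∀ t : ℕ, traj A B σ u x₀ t = (A ^ t).mulVec x₀ + traj A B σ u 0 t
  | 0 => by simp [traj]
  | t+1 => by
    simp only [traj, traj_decomp σ u x₀ t, Matrix.mulVec_add]
    rw [pow_succ', ← Matrix.mulVec_mulVec]
    abel

lemma traj_add (σ : ℕ → Bool) (u u' : ℕ → Fin m → ℝ) :
    ∀ t : ℕ, traj A B σ (u + u') 0 t = traj A B σ u 0 t + traj A B σ u' 0 t
  | 0 => by simp [traj]
  | t+1 => by
    simp only [traj, traj_add σ u u' t, Matrix.mulVec_add, Pi.add_apply]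
    split <;> abel

lemma traj_smul (σ : ℕ → Bool) (c : ℝ) (u : ℕ → Fin m → ℝ) :
    ∀ t : ℕ, traj A B σ (c • u) 0 t = c • traj A B σ u 0 t
  | 0 => by simp [traj]
  | t+1 => by
    simp only [traj, traj_smul σ c u t, Matrix.mulVec_smul, Pi.smul_apply]
    split <;> simp [Matrix.mulVec_smul, smul_add]

/-- `traj` from `0` at time `t` as a linear map in the input. -/
def trajL (σ : ℕ → Bool) (t : ℕ) : (ℕ → Fin m → ℝ) →ₗ[ℝ] (Fin n → ℝ) where
  toFun u := traj A B σ u 0 t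
  map_add' u u' := traj_add A B σ u u' t
  map_smul' c u := traj_smul A B σ c u t

lemma trajL_apply (σ : ℕ → Bool) (t : ℕ) (u : ℕ → Fin m → ℝ) :
    trajL A B σ t u = traj A B σ u 0 t := rfl

lemma exists_top_of_forall_mem {S : ℕ → Submodule ℝ (Fin n → ℝ)}
    (h : ∀ x, ∃ t, x ∈ S t) : ∃ t, S t = ⊤ := by
  obtain ⟨t, ht⟩ := nonempty_interior_of_iUnion_of_closed
    (fun t => (S t).closed_of_finiteDimensional)
    (by ext x; simpa using h x)
  exact ⟨t, Submodule.eq_top_of_nonempty_interior' _ ht⟩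

/-- Uniformization via compactness: a prefix-determined property holding at some time
for every admissible signal holds at a uniformly bounded time. -/
lemma uniformize {N : ℕ} (𝒜 : Automaton N) (G : (ℕ → Bool) → ℕ → Prop)
    (hpre : ∀ σ σ' t, (∀ i, i < t → σ i = σ' i) → G σ t → G σ' t)
    (h : ∀ σ, 𝒜.Admissible σ → ∃ t, G σ t) :
    ∃ T : ℕ, ∀ σ, 𝒜.Admissible σ → ∃ t ≤ T, G σ t := by
  by_contra hc
  push_neg at hc
  choose σ hσ hG using hc
  choose w hw using hσ
  set U := hyperfilter ℕ with hU
  have hval : ∀ t : ℕ, ∃ a : Fin N, {T | w T t = a} ∈ U := by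
    intro t
    obtain ⟨a, ha⟩ := Ultrafilter.eq_pure_of_finite (U.map (fun T => w T t))
    exact ⟨a, by
      have : {a} ∈ U.map (fun T => w T t) := by rw [ha]; exact rfl
      simpa [Ultrafilter.mem_map, Set.preimage, Set.mem_singleton_iff] using this⟩
  choose v hv using hval
  -- the limit signal
  set σL : ℕ → Bool := fun t => 𝒜.s (v t) with hσL
  have hadm : 𝒜.Admissible σL := by
    refine ⟨v, fun t => ⟨?_, rfl⟩⟩
    have hmem : {T | w T t = v t} ∩ {T | w T (t+1) = v (t+1)} ∈ U :=
      Filter.inter_mem (hv t) (hv (t+1))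
    obtain ⟨T, hT1, hT2⟩ := Ultrafilter.nonempty_of_mem hmem
    rw [← hT1, ← hT2]
    exact (hw T t).1
  obtain ⟨t₀, ht₀⟩ := h σL hadm
  -- find a signal agreeing with σL up to time t₀ with index ≥ t₀
  have hmem : (⋂ t ∈ Finset.range (t₀+1), {T | w T t = v t}) ∩ {T | t₀ ≤ T} ∈ U := by
    refine Filter.inter_mem ?_ ?_
    · exact (Filter.biInter_finset_mem _).2 (fun t _ => hv t)
    · exact mem_hyperfilter_of_finite_compl (by
        have : {T : ℕ | t₀ ≤ T}ᶜ ⊆ Set.Iio t₀ := by intro x hx; simpa using hx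
        exact (Set.finite_Iio t₀).subset this)
  obtain ⟨T', hT'1, hT'2⟩ := Ultrafilter.nonempty_of_mem hmem
  simp only [Set.mem_iInter, Set.mem_setOf_eq, Finset.mem_range] at hT'1 hT'2
  have hagree : ∀ i, i < t₀ → σL i = σ T' i := by
    intro i hi
    rw [(hw T' i).2, hT'1 i (by omega)]
  exact hG T' t₀ hT'2 (hpre σL (σ T') t₀ hagree ht₀)

end PCaux

/-- Practical reachability, practical controllability and practical 0-controllability
are equivalent to their non-practical counterparts. -/
theorem practical_controllability_iff {N n m : ℕ} (A : Matrix (Fin n) (Fin n) ℝ)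
    (B : Matrix (Fin n) (Fin m) ℝ) (𝒜 : Automaton N) :
    (PracticallyReachable A B 𝒜 ↔ Reachable A B 𝒜) ∧
    (PracticallyControllable A B 𝒜 ↔ Controllable A B 𝒜) ∧
    (PracticallyZeroControllable A B 𝒜 ↔ ZeroControllable A B 𝒜) := by
  have hGpre : ∀ σ σ' t, (∀ i, i < t → σ i = σ' i) →
      (∀ xf : Fin n → ℝ, ∃ u, traj A B σ u 0 t = xf) →
      (∀ xf : Fin n → ℝ, ∃ u, traj A B σ' u 0 t = xf) := by
    intro σ σ' t hag h xf
    obtain ⟨u, hu⟩ := h xf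
    exact ⟨u, by rw [← PCaux.traj_congr A B σ σ' u 0 t hag]; exact hu⟩
  have hreach_uniform : Reachable A B 𝒜 →
      ∃ T, ∀ σ, 𝒜.Admissible σ → ∃ t ≤ T, ∀ xf, ∃ u, traj A B σ u 0 t = xf := by
    intro hR
    refine PCaux.uniformize 𝒜 _ hGpre ?_
    intro σ hσ
    have hall : ∀ x, ∃ t, x ∈ LinearMap.range (PCaux.trajL A B σ t) := by
      intro x
      obtain ⟨u, T, hu⟩ := hR σ hσ x
      exact ⟨T, ⟨u, by rw [PCaux.trajL_apply]; exact hu⟩⟩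
    obtain ⟨t, ht⟩ := PCaux.exists_top_of_forall_mem hall
    refine ⟨t, fun xf => ?_⟩
    have hmem : xf ∈ LinearMap.range (PCaux.trajL A B σ t) := ht ▸ Submodule.mem_top
    obtain ⟨u, hu⟩ := hmem
    exact ⟨u, by rw [← PCaux.trajL_apply]; exact hu⟩
  refine ⟨⟨?_, ?_⟩, ⟨?_, ?_⟩, ⟨?_, ?_⟩⟩
  · rintro ⟨T, h⟩ σ hσ xf
    obtain ⟨u, t, _, hu⟩ := h σ hσ xf
    exact ⟨u, t, hu⟩
  · intro hR
    obtain ⟨T, hT⟩ := hreach_uniform hR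
    refine ⟨T, fun σ hσ xf => ?_⟩
    obtain ⟨t, htT, hfull⟩ := hT σ hσ
    obtain ⟨u, hu⟩ := hfull xf
    exact ⟨u, t, htT, hu⟩
  · rintro ⟨T, h⟩ σ hσ x₀ xf
    obtain ⟨u, t, _, hu⟩ := h σ hσ x₀ xf
    exact ⟨u, t, hu⟩
  · intro hC
    have hR : Reachable A B 𝒜 := fun σ hσ xf => hC σ hσ 0 xf
    obtain ⟨T, hT⟩ := hreach_uniform hR
    refine ⟨T, fun σ hσ x₀ xf => ?_⟩
    obtain ⟨t, htT, hfull⟩ := hT σ hσ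
    obtain ⟨u, hu⟩ := hfull (xf - (A ^ t).mulVec x₀)
    refine ⟨u, t, htT, ?_⟩
    rw [PCaux.traj_decomp A B σ u x₀ t, hu]
    abel
  · rintro ⟨T, h⟩ σ hσ x₀
    obtain ⟨u, t, _, hu⟩ := h σ hσ x₀
    exact ⟨u, t, hu⟩
  · intro hZ
    have hGz : ∀ σ σ' t, (∀ i, i < t → σ i = σ' i) →
        (∀ x₀ : Fin n → ℝ, ∃ u, traj A B σ u x₀ t = 0) →
        (∀ x₀ : Fin n → ℝ, ∃ u, traj A B σ' u x₀ t = 0) := by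
      intro σ σ' t hag h x₀
      obtain ⟨u, hu⟩ := h x₀
      exact ⟨u, by rw [← PCaux.traj_congr A B σ σ' u x₀ t hag]; exact hu⟩
    have hper : ∀ σ, 𝒜.Admissible σ → ∃ t, ∀ x₀ : Fin n → ℝ, ∃ u, traj A B σ u x₀ t = 0 := by
      intro σ hσ
      have hall : ∀ x, ∃ t, x ∈ Submodule.comap ((A ^ t).mulVecLin)
          (LinearMap.range (PCaux.trajL A B σ t)) := by
        intro x
        obtain ⟨u, t, hu⟩ := hZ σ hσ x
        rw [PCaux.traj_decomp A B σ u x t] at hu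
        refine ⟨t, ?_⟩
        simp only [Submodule.mem_comap, Matrix.mulVecLin_apply]
        refine ⟨-u, ?_⟩
        rw [map_neg, PCaux.trajL_apply, eq_comm, eq_neg_iff_add_eq_zero]
        exact hu
      obtain ⟨t, ht⟩ := PCaux.exists_top_of_forall_mem hall
      refine ⟨t, fun x₀ => ?_⟩
      have hmem : x₀ ∈ Submodule.comap ((A ^ t).mulVecLin)
          (LinearMap.range (PCaux.trajL A B σ t)) := ht ▸ Submodule.mem_top
      simp only [Submodule.mem_comap, Matrix.mulVecLin_apply] at hmem
      obtain ⟨u, hu⟩ := hmem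
      refine ⟨-u, ?_⟩
      rw [PCaux.traj_decomp A B σ (-u) x₀ t, ← PCaux.trajL_apply, map_neg, hu]
      abel
    obtain ⟨T, hT⟩ := PCaux.uniformize 𝒜 _ hGz hper
    refine ⟨T, fun σ hσ x₀ => ?_⟩
    obtain ⟨t, htT, hfull⟩ := hT σ hσ
    obtain ⟨u, hu⟩ := hfull x₀
    exact ⟨u, t, htT, hu⟩
end

section
/- The system (A,C,𝒜) is detectable if and only if the dual system (Aᵀ, Cᵀ, 𝒜ʳ) is stabilizable. -/
open Matrix Filter

/-!
Both directions rest on the pairing `η T ⬝ᵥ x T = η 0 ⬝ᵥ x 0` between a trajectory `x` of the dual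
system `x (t+1) = Aᵀ x t + σ' t • Cᵀ u t` and a backward chain `A η (s+1) = η s` that `C` does not
see at the instants where `σ'` is on. Reading a run of `𝒜` backwards gives a run of `𝒜ʳ`, and
Kőnig's lemma turns runs of every finite length into a single infinite one.

(⇒) Detectability yields a horizon `T` such that along every run of length `T` of `𝒜` no nonzero
vector orthogonal to the stable subspace of `Aᵀ` is unobservable: otherwise Kőnig's lemma and the
stabilization of decreasing subspaces produce a nonzero unobservable vector, stable for `A` and
orthogonal to the stable subspace of `Aᵀ`, which cannot exist (check it on the complex generalized
eigenspaces of `Aᵀ`). By duality the states reachable at time `T` and the stable subspace of `Aᵀ`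
then span everything, so the input can push `(Aᵀ) ^ T x₀` into the stable subspace and then stop.

(⇐) If an unobservable `x₀` has `A ^ t x₀ ↛ 0`, then at the times `T` where `‖A ^ T x₀‖` is, up to a
constant, a running maximum, the chains `A ^ (T - s) x₀ / ‖A ^ T x₀‖` are bounded and start on the
unit sphere. Kőnig's lemma puts such chains for every `T` on one signal of `𝒜ʳ`, and pairing them
with stabilized trajectories started at the basis vectors forces their initial values to `0`.
-/

open Topology

section StableSubspace

variable {ι : Type*} [Fintype ι] [DecidableEq ι]

def stableSubspace (A : Matrix ι ι ℝ) : Submodule ℝ (ι → ℝ) where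
  carrier := {x | Tendsto (fun t : ℕ => (A ^ t) *ᵥ x) atTop (𝓝 0)}
  add_mem' hx hy := by simpa [mulVec_add] using hx.add hy
  zero_mem' := by simp
  smul_mem' c _ hx := by simpa [mulVec_smul] using hx.const_smul c

lemma mem_stableSubspace {A : Matrix ι ι ℝ} {x : ι → ℝ} :
    x ∈ stableSubspace A ↔ Tendsto (fun t : ℕ => (A ^ t) *ᵥ x) atTop (𝓝 0) :=
  Iff.rfl

end StableSubspace

lemma tendsto_zero_of_eq_smul_add {𝕜 E : Type*} [NormedField 𝕜] [SeminormedAddCommGroup E]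
    [NormedSpace 𝕜 E] {μ : 𝕜} (hμ : ‖μ‖ < 1) {y e : ℕ → E} (hy : ∀ t, y (t + 1) = μ • y t + e t)
    (he : Tendsto e atTop (𝓝 0)) : Tendsto y atTop (𝓝 0) := by
  set r := ‖μ‖
  refine Metric.tendsto_atTop.2 fun ε hε => ?_
  have hδ : 0 < ε * (1 - r) / 2 := by have : 0 < 1 - r := sub_pos.2 hμ; positivity
  obtain ⟨T₀, hT₀⟩ := Metric.tendsto_atTop.1 he _ hδ
  have hbound : ∀ s, ‖y (T₀ + s)‖ ≤ r ^ s * ‖y T₀‖ + ε / 2 := by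
    intro s
    induction s with
    | zero => simpa using half_pos hε |>.le
    | succ s ih =>
      have hes : ‖e (T₀ + s)‖ < ε * (1 - r) / 2 := by simpa using hT₀ (T₀ + s) le_self_add
      calc ‖y (T₀ + (s + 1))‖ = ‖μ • y (T₀ + s) + e (T₀ + s)‖ := by rw [← add_assoc, hy]
        _ ≤ r * ‖y (T₀ + s)‖ + ε * (1 - r) / 2 := by
          grw [norm_add_le, norm_smul, hes]
        _ ≤ r * (r ^ s * ‖y T₀‖ + ε / 2) + ε * (1 - r) / 2 := by gcongr
        _ = r ^ (s + 1) * ‖y T₀‖ + ε / 2 := by ring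
  have hgeom : Tendsto (fun s : ℕ => r ^ s * ‖y T₀‖) atTop (𝓝 0) := by
    simpa using (tendsto_pow_atTop_nhds_zero_of_lt_one (norm_nonneg μ) hμ).mul_const ‖y T₀‖
  obtain ⟨S, hS⟩ := eventually_atTop.1 (hgeom.eventually (gt_mem_nhds (half_pos hε)))
  refine ⟨T₀ + S, fun t ht => ?_⟩
  obtain ⟨s, rfl⟩ := Nat.exists_eq_add_of_le (le_self_add.trans ht)
  rw [dist_zero_right]
  linarith [hbound s, hS s (by omega)]

namespace Module.End

section Field

variable {𝕜 V : Type*} [NormedField 𝕜] [AddCommGroup V] [Module 𝕜 V]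

lemma pow_succ_apply_eq_smul_add (f : Module.End 𝕜 V) (μ : 𝕜) (t : ℕ) (w : V) :
    (f ^ (t + 1)) w = μ • (f ^ t) w + (f ^ t) ((f - μ • 1) w) := by
  rw [pow_succ, mul_apply, ← map_smul, ← map_add]
  simp

lemma eq_zero_of_mem_maxGenEigenspace {f : Module.End 𝕜 V} {μ : 𝕜} (φ : V →ₗ[𝕜] 𝕜)
    (hμ : 1 ≤ ‖μ‖) (hφ : ∀ v, Tendsto (fun t : ℕ => φ ((f ^ t) v)) atTop (𝓝 0)) {w : V}
    (hw : w ∈ f.maxGenEigenspace μ) : φ w = 0 := by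
  obtain ⟨k, hk⟩ := (mem_maxGenEigenspace f μ w).1 hw
  clear hw
  induction k generalizing w with
  | zero => simp_all
  | succ k ih =>
    have hcomm : Commute (f - μ • 1) f :=
      (Commute.refl f).sub_left ((Commute.one_left f).smul_left μ)
    have hfw : ∀ t, φ ((f ^ t) ((f - μ • 1) w)) = 0 := fun t => ih <| by
      rw [← mul_apply, (hcomm.pow_pow k t).eq, mul_apply, ← mul_apply ((f - μ • 1) ^ k),
        ← pow_succ, hk, map_zero]
    have hgeom : ∀ t, φ ((f ^ t) w) = μ ^ t * φ w := by
      intro t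
      induction t with
      | zero => simp
      | succ t iht =>
        rw [pow_succ_apply_eq_smul_add, map_add, hfw, map_smul, iht, smul_eq_mul, add_zero]
        ring
    have hlim := (hφ w).norm
    simp only [hgeom, norm_mul, norm_pow, norm_zero] at hlim
    exact norm_le_zero_iff.1 <| ge_of_tendsto' hlim fun t =>
      le_mul_of_one_le_left (norm_nonneg _) (one_le_pow₀ hμ)

end Field

lemma tendsto_pow_apply_of_mem_maxGenEigenspace {𝕜 V : Type*} [NormedField 𝕜]
    [SeminormedAddCommGroup V] [NormedSpace 𝕜 V] {f : Module.End 𝕜 V} {μ : 𝕜} (hμ : ‖μ‖ < 1)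
    {w : V} (hw : w ∈ f.maxGenEigenspace μ) : Tendsto (fun t : ℕ => (f ^ t) w) atTop (𝓝 0) := by
  obtain ⟨k, hk⟩ := (mem_maxGenEigenspace f μ w).1 hw
  clear hw
  induction k generalizing w with
  | zero => simp_all [tendsto_const_nhds]
  | succ k ih =>
    refine tendsto_zero_of_eq_smul_add hμ (pow_succ_apply_eq_smul_add f μ · w) (ih ?_)
    rw [← mul_apply, ← pow_succ, hk]

end Module.End

section Complexification

variable {ι κ : Type*} [Fintype κ]

lemma re_comp_map_ofReal_mulVec (M : Matrix ι κ ℝ) (w : κ → ℂ) :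
    Complex.re ∘ (M.map (↑) *ᵥ w) = M *ᵥ (Complex.re ∘ w) := by
  ext i; simp [mulVec, dotProduct, Complex.re_sum]

lemma im_comp_map_ofReal_mulVec (M : Matrix ι κ ℝ) (w : κ → ℂ) :
    Complex.im ∘ (M.map (↑) *ᵥ w) = M *ᵥ (Complex.im ∘ w) := by
  ext i; simp [mulVec, dotProduct, Complex.im_sum]

lemma re_ofReal_comp_dotProduct (x : κ → ℝ) (w : κ → ℂ) :
    (((↑) ∘ x : κ → ℂ) ⬝ᵥ w).re = x ⬝ᵥ (Complex.re ∘ w) := by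
  simp [dotProduct, Complex.re_sum]

lemma im_ofReal_comp_dotProduct (x : κ → ℝ) (w : κ → ℂ) :
    (((↑) ∘ x : κ → ℂ) ⬝ᵥ w).im = x ⬝ᵥ (Complex.im ∘ w) := by
  simp [dotProduct, Complex.im_sum]

lemma map_ofReal_mulVec (M : Matrix ι κ ℝ) (x : κ → ℝ) :
    M.map (↑) *ᵥ ((↑) ∘ x) = ((↑) ∘ (M *ᵥ x) : ι → ℂ) :=
  funext fun i => (Complex.ofRealHom.map_mulVec M x i).symm

end Complexification

lemma eq_zero_of_mem_stableSubspace_of_forall_dotProduct_eq_zero {ι : Type*} [Fintype ι]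
    [DecidableEq ι] {A : Matrix ι ι ℝ} {x : ι → ℝ} (hx : x ∈ stableSubspace A)
    (horth : ∀ z ∈ stableSubspace Aᵀ, x ⬝ᵥ z = 0) : x = 0 := by
  set f : Module.End ℂ (ι → ℂ) := toLin' (A.map (↑))ᵀ
  set φ : Module.Dual ℂ (ι → ℂ) := dotProductEquiv ℂ ι ((↑) ∘ x)
  have hf : ∀ t v, (f ^ t) v = (Aᵀ ^ t).map (↑) *ᵥ v := fun t v => by
    rw [← toLin'_pow, toLin'_apply, ← transpose_map]
    exact congrArg (· *ᵥ v) (Matrix.map_pow Aᵀ Complex.ofRealHom t).symm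
  have hφ : ∀ v, Tendsto (fun t : ℕ => φ ((f ^ t) v)) atTop (𝓝 0) := by
    intro v
    have hpair : ∀ t, φ ((f ^ t) v) = ((↑) ∘ ((A ^ t) *ᵥ x) : ι → ℂ) ⬝ᵥ v := fun t => by
      rw [hf, ← transpose_pow, transpose_map, dotProductEquiv_apply_apply, dotProduct_mulVec,
        vecMul_transpose, map_ofReal_mulVec]
    have hcont : Continuous fun z : ι → ℝ => ((↑) ∘ z : ι → ℂ) ⬝ᵥ v := by fun_prop
    simpa [hpair, Function.comp_def] using (hcont.tendsto 0).comp hx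
  have hstable : ∀ μ : ℂ, ‖μ‖ < 1 → ∀ w ∈ f.maxGenEigenspace μ, φ w = 0 := by
    intro μ hμ w hw
    have hdecay := Module.End.tendsto_pow_apply_of_mem_maxGenEigenspace hμ hw
    simp only [hf] at hdecay
    have hre : Complex.re ∘ w ∈ stableSubspace Aᵀ := by
      have hc : Continuous fun z : ι → ℂ => Complex.re ∘ z := by fun_prop
      rw [mem_stableSubspace]
      convert (hc.tendsto 0).comp hdecay using 1
      · exact funext fun t => (re_comp_map_ofReal_mulVec _ _).symm
      · simp
    have him : Complex.im ∘ w ∈ stableSubspace Aᵀ := by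
      have hc : Continuous fun z : ι → ℂ => Complex.im ∘ z := by fun_prop
      rw [mem_stableSubspace]
      convert (hc.tendsto 0).comp hdecay using 1
      · exact funext fun t => (im_comp_map_ofReal_mulVec _ _).symm
      · simp
    apply Complex.ext
    · simp [φ, re_ofReal_comp_dotProduct, horth _ hre]
    · simp [φ, im_ofReal_comp_dotProduct, horth _ him]
  have hker : ⨆ μ, f.maxGenEigenspace μ ≤ LinearMap.ker φ := iSup_le fun μ w hw =>
    if hμ : ‖μ‖ < 1 then hstable μ hμ w hw
    else Module.End.eq_zero_of_mem_maxGenEigenspace φ (not_lt.1 hμ) hφ hw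
  rw [Module.End.iSup_maxGenEigenspace_eq_top, top_le_iff, LinearMap.ker_eq_top,
    LinearEquiv.map_eq_zero_iff] at hker
  exact funext fun i => by simpa using congrFun hker i

lemma exists_ne_zero_forall_dotProduct_eq_zero {K ι : Type*} [Field K] [Fintype ι]
    [DecidableEq ι] {W : Submodule K (ι → K)} (hW : W ≠ ⊤) :
    ∃ y ≠ 0, ∀ x ∈ W, y ⬝ᵥ x = 0 := by
  obtain ⟨f, hf, hWf⟩ := W.exists_le_ker_of_lt_top hW.lt_top
  refine ⟨(dotProductEquiv K ι).symm f, by simpa using hf, fun x hx => ?_⟩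
  rw [← dotProductEquiv_apply_apply, LinearEquiv.apply_symm_apply]
  exact hWf hx

lemma tendsto_dotProduct_zero_of_norm_le {ι α : Type*} [Fintype ι] {l : Filter α}
    {a b : α → ι → ℝ} {K : ℝ} (ha : ∀ x, ‖a x‖ ≤ K) (hb : Tendsto b l (𝓝 0)) :
    Tendsto (fun x => a x ⬝ᵥ b x) l (𝓝 0) := by
  simpa [dotProduct] using tendsto_finsetSum Finset.univ fun i _ =>
    isBoundedUnder_le_mul_tendsto_zero (f := fun x => a x i)
      ⟨K, eventually_map.2 <| Eventually.of_forall fun x => (norm_le_pi_norm (a x) i).trans (ha x)⟩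
      (tendsto_pi_nhds.1 hb i)

lemma exists_forall_of_forall_exists_of_prefix {β : Type*} [Finite β] {P : ℕ → (ℕ → β) → Prop}
    (hanti : ∀ {i j v}, i ≤ j → P j v → P i v)
    (hprefix : ∀ {i v w}, (∀ s < i, v s = w s) → P i v → P i w)
    (hex : ∀ i, ∃ v, P i v) : ∃ v, ∀ i, P i v := by
  let α : ℕ → Type _ := fun i => {r : Fin i → β // ∃ v, P i v ∧ ∀ s : Fin i, v s = r s}
  have : ∀ i, Nonempty (α i) := fun i =>
    let ⟨v, hv⟩ := hex i
    ⟨⟨fun s => v s, v, hv, fun _ => rfl⟩⟩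
  let π : {i j : ℕ} → i ≤ j → α j → α i := fun hij r =>
    ⟨fun s => r.1 (Fin.castLE hij s), r.2.elim fun v hv =>
      ⟨v, hanti hij hv.1, fun s => hv.2 (Fin.castLE hij s)⟩⟩
  obtain ⟨f, hf⟩ := exists_seq_forall_proj_of_forall_finite π (fun _ _ => rfl)
    (fun _ _ _ _ _ _ => rfl) (fun _ _ => Set.toFinite _)
  refine ⟨fun s => (f (s + 1)).1 (Fin.last s), fun i => ?_⟩
  obtain ⟨v, hv, hvf⟩ := (f i).2
  refine hprefix (fun s hs => ?_) hv
  rw [hvf ⟨s, hs⟩, ← hf (Nat.succ_le_of_lt hs)]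
  rfl

lemma Submodule.exists_ne_zero_forall_mem_of_antitone {R M : Type*} [Ring R] [AddCommGroup M]
    [Module R M] [IsArtinian R M] {W : ℕ → Submodule R M} (hW : Antitone W)
    (hne : ∀ i, W i ≠ ⊥) : ∃ y ≠ 0, ∀ i, y ∈ W i := by
  obtain ⟨n, hn⟩ := IsArtinian.monotone_stabilizes ⟨fun i => OrderDual.toDual (W i), hW⟩
  obtain ⟨y, hy, hy0⟩ := Submodule.exists_mem_ne_zero_of_ne_bot (hne n)
  refine ⟨y, hy0, fun i => ?_⟩
  rcases le_total i n with hin | hni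
  · exact hW hin hy
  · have hWn : W n = W i := hn i hni
    exact hWn ▸ hy

lemma exists_frequently_le_mul_of_not_tendsto {c : ℕ → ℝ} (hc : ∀ t, 0 ≤ c t)
    (h : ¬Tendsto c atTop (𝓝 0)) : ∃ K, ∀ L, ∃ T ≥ L, 0 < c T ∧ ∀ j ≤ T, c j ≤ K * c T := by
  by_cases hbdd : BddAbove (Set.range c)
  · obtain ⟨M, hM⟩ := hbdd
    obtain ⟨ε, hε, hfreq⟩ : ∃ ε > 0, ∀ L, ∃ T ≥ L, ε ≤ c T := by
      simpa [Metric.tendsto_atTop, Real.dist_eq, abs_of_nonneg (hc _)] using h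
    have hM0 : 0 ≤ M := (hc 0).trans (hM ⟨0, rfl⟩)
    refine ⟨M / ε, fun L => ?_⟩
    obtain ⟨T, hLT, hεT⟩ := hfreq L
    refine ⟨T, hLT, hε.trans_le hεT, fun j _ => ?_⟩
    calc c j ≤ M := hM ⟨j, rfl⟩
      _ = M / ε * ε := by field_simp
      _ ≤ M / ε * c T := by gcongr
  · refine ⟨1, fun L => ?_⟩
    obtain ⟨_, ⟨t', rfl⟩, ht'⟩ :=
      not_bddAbove_iff.1 hbdd ((Finset.range (L + 1)).sup' (by simp) c)
    have hlt : ∀ j ≤ L, c j < c t' := fun j hj =>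
      (Finset.le_sup' c (Finset.mem_range.2 (Nat.lt_succ_of_le hj))).trans_lt ht'
    obtain ⟨T, hT, hmax⟩ := Finset.exists_max_image (Finset.range (t' + 1)) c ⟨t', by simp⟩
    have hTt' : T ≤ t' := Nat.lt_succ_iff.1 (Finset.mem_range.1 hT)
    have hcT : c t' ≤ c T := hmax t' (by simp)
    refine ⟨T, ?_, (hc 0).trans_lt ((hlt 0 L.zero_le).trans_le hcT), fun j hj => ?_⟩
    · by_contra! hTL
      exact (hlt T hTL.le).not_ge hcT
    · rw [one_mul]
      exact hmax j (Finset.mem_range.2 (by omega))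

namespace Automaton

variable {N : ℕ}

def IsRun (𝒜 : Automaton N) (T : ℕ) (v : ℕ → Fin N) : Prop :=
  ∀ s, s + 1 < T → 𝒜.M (v s) (v (s + 1)) = true

variable {𝒜 : Automaton N} {T : ℕ} {v : ℕ → Fin N}

lemma IsRun.mono (h : 𝒜.IsRun T v) {T' : ℕ} (hT : T' ≤ T) : 𝒜.IsRun T' v :=
  fun s hs => h s (by omega)

lemma IsRun.congr (h : 𝒜.IsRun T v) {w : ℕ → Fin N} (hvw : ∀ s < T, v s = w s) :
    𝒜.IsRun T w := fun s hs => by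
  rw [← hvw s (by omega), ← hvw (s + 1) hs]
  exact h s hs

lemma IsRun.reverse (h : 𝒜.IsRun T v) : 𝒜.rev.IsRun T (fun s => v (T - 1 - s)) := fun s hs => by
  have hstep := h (T - 1 - (s + 1)) (by omega)
  rwa [show T - 1 - (s + 1) + 1 = T - 1 - s by omega] at hstep

lemma admissible_of_forall_isRun (h : ∀ T, 𝒜.IsRun T v) : 𝒜.Admissible fun t => 𝒜.s (v t) :=
  ⟨v, fun t => ⟨h (t + 2) t (by omega), rfl⟩⟩

end Automaton

section Trajectory

variable {n m : ℕ} (A : Matrix (Fin n) (Fin n) ℝ) (B : Matrix (Fin n) (Fin m) ℝ) (σ : ℕ → Bool)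

def reachMap (T : ℕ) : (ℕ → Fin m → ℝ) →ₗ[ℝ] (Fin n → ℝ) :=
  ∑ t ∈ Finset.range T, if σ t then (A ^ (T - 1 - t) * B).mulVecLin ∘ₗ LinearMap.proj t else 0

lemma reachMap_apply (T : ℕ) (u : ℕ → Fin m → ℝ) :
    reachMap A B σ T u =
      ∑ t ∈ Finset.range T, if σ t then (A ^ (T - 1 - t) * B) *ᵥ u t else 0 := by
  rw [reachMap, LinearMap.sum_apply]
  refine Finset.sum_congr rfl fun t _ => ?_
  split_ifs <;> simp [mulVec_mulVec]

lemma traj_eq_pow_mulVec_add_reachMap (u : ℕ → Fin m → ℝ) (x₀ : Fin n → ℝ) (T : ℕ) :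
    traj A B σ u x₀ T = (A ^ T) *ᵥ x₀ + reachMap A B σ T u := by
  induction T with
  | zero => simp [traj, reachMap_apply]
  | succ T ih =>
    have hstep : A *ᵥ reachMap A B σ T u + (if σ T then B *ᵥ u T else 0) =
        reachMap A B σ (T + 1) u := by
      rw [reachMap_apply, reachMap_apply, mulVec_sum, Finset.sum_range_succ]
      congr 1
      · refine Finset.sum_congr rfl fun t ht => ?_
        have hT : T + 1 - 1 - t = T - 1 - t + 1 := by have := Finset.mem_range.1 ht; omega
        split_ifs
        · rw [hT, pow_succ', Matrix.mul_assoc, mulVec_mulVec]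
        · exact mulVec_zero A
      · simp
    rw [traj, ih, mulVec_add, mulVec_mulVec, ← pow_succ', add_assoc, hstep]

lemma vecMul_eq_zero_of_forall_dotProduct_reachMap_eq_zero {T : ℕ} {y : Fin n → ℝ}
    (hy : ∀ u, y ⬝ᵥ reachMap A B σ T u = 0) {t : ℕ} (ht : t < T) (hσ : σ t = true) :
    y ᵥ* (A ^ (T - 1 - t) * B) = 0 := by
  set w := y ᵥ* (A ^ (T - 1 - t) * B)
  have himpulse : reachMap A B σ T (Pi.single t w) = (A ^ (T - 1 - t) * B) *ᵥ w := by
    rw [reachMap_apply, Finset.sum_eq_single t (fun s _ hst => by simp [hst])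
      (fun h => absurd (Finset.mem_range.2 ht) h)]
    simp [hσ]
  have hw := hy (Pi.single t w)
  rwa [himpulse, dotProduct_mulVec, dotProduct_self_eq_zero] at hw

lemma exists_tendsto_traj_of_mem_sup {T : ℕ} {x₀ : Fin n → ℝ}
    (h : (A ^ T) *ᵥ x₀ ∈ LinearMap.range (reachMap A B σ T) ⊔ stableSubspace A) :
    ∃ u, Tendsto (traj A B σ u x₀) atTop (𝓝 0) := by
  obtain ⟨_, ⟨u, rfl⟩, z, hz, hsum⟩ := Submodule.mem_sup.1 h
  set u' : ℕ → Fin m → ℝ := fun t => if t < T then -u t else 0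
  have hT : traj A B σ u' x₀ T = z := by
    have hcancel : reachMap A B σ T u' = -reachMap A B σ T u := by
      rw [← map_neg, reachMap_apply, reachMap_apply]
      refine Finset.sum_congr rfl fun t ht => ?_
      simp [u', Finset.mem_range.1 ht]
    rw [traj_eq_pow_mulVec_add_reachMap, hcancel, ← hsum]
    abel
  have hcoast : ∀ k, traj A B σ u' x₀ (T + k) = (A ^ k) *ᵥ z := by
    intro k
    induction k with
    | zero => simpa using hT
    | succ k ih => simp [traj, ih, u', mulVec_mulVec, pow_succ']
  refine ⟨u', (tendsto_add_atTop_iff_nat T).1 ?_⟩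
  simpa [add_comm, hcoast] using mem_stableSubspace.1 hz

end Trajectory

section AdjointChain

variable {ι κ : Type*} [Fintype ι]

def IsAdjointChain (A : Matrix ι ι ℝ) (B : Matrix ι κ ℝ) (σ : ℕ → Bool) (T : ℕ)
    (η : ℕ → ι → ℝ) : Prop :=
  ∀ s < T, η (s + 1) ᵥ* A = η s ∧ (σ s = true → η (s + 1) ᵥ* B = 0)

variable {A : Matrix ι ι ℝ} {B : Matrix ι κ ℝ} {σ : ℕ → Bool} {T : ℕ} {η : ℕ → ι → ℝ}

lemma IsAdjointChain.mono (h : IsAdjointChain A B σ T η) {T' : ℕ} (hT : T' ≤ T) :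
    IsAdjointChain A B σ T' η :=
  fun s hs => h s (by omega)

lemma IsAdjointChain.congr (h : IsAdjointChain A B σ T η) {σ' : ℕ → Bool}
    (hσ : ∀ s < T, σ s = σ' s) : IsAdjointChain A B σ' T η :=
  fun s hs => ⟨(h s hs).1, fun hs' => (h s hs).2 (by rwa [hσ s hs])⟩

lemma IsAdjointChain.smul [Fintype κ] (h : IsAdjointChain A B σ T η) (c : ℝ) :
    IsAdjointChain A B σ T (c • η) :=
  fun s hs => ⟨by simp [smul_vecMul, (h s hs).1], fun hσ => by simp [smul_vecMul, (h s hs).2 hσ]⟩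

end AdjointChain

lemma IsAdjointChain.dotProduct_traj {n m : ℕ} {A : Matrix (Fin n) (Fin n) ℝ}
    {B : Matrix (Fin n) (Fin m) ℝ} {σ : ℕ → Bool} {T : ℕ} {η : ℕ → Fin n → ℝ}
    (h : IsAdjointChain A B σ T η) (u : ℕ → Fin m → ℝ) (x₀ : Fin n → ℝ) :
    η T ⬝ᵥ traj A B σ u x₀ T = η 0 ⬝ᵥ x₀ := by
  induction T with
  | zero => rfl
  | succ T ih =>
    have hinput : η (T + 1) ⬝ᵥ (if σ T then B *ᵥ u T else 0) = 0 := by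
      split_ifs with hσ
      · rw [dotProduct_mulVec, (h T (by omega)).2 hσ, zero_dotProduct]
      · exact dotProduct_zero _
    rw [traj, dotProduct_add, hinput, add_zero, dotProduct_mulVec, (h T (by omega)).1,
      ih (h.mono T.le_succ)]

lemma tendsto_zero_of_isAdjointChain_of_norm_le {n m : ℕ} {A : Matrix (Fin n) (Fin n) ℝ}
    {B : Matrix (Fin n) (Fin m) ℝ} {σ : ℕ → Bool}
    (hstab : ∀ x₀, ∃ u, Tendsto (traj A B σ u x₀) atTop (𝓝 0)) {η : ℕ → ℕ → Fin n → ℝ} {K : ℝ}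
    (hη : ∀ T, IsAdjointChain A B σ T (η T)) (hK : ∀ T, ‖η T T‖ ≤ K) :
    Tendsto (fun T => η T 0) atTop (𝓝 0) := by
  refine tendsto_pi_nhds.2 fun i => ?_
  obtain ⟨u, hu⟩ := hstab (Pi.single i 1)
  have hpair : ∀ T, η T 0 i = η T T ⬝ᵥ traj A B σ u (Pi.single i 1) T := fun T => by
    rw [(hη T).dotProduct_traj, dotProduct_single, mul_one]
  simpa [hpair] using tendsto_dotProduct_zero_of_norm_le hK hu

section Unobservable

variable {ι κ : Type*} [Fintype ι] [DecidableEq ι] (A : Matrix ι ι ℝ) (C : Matrix κ ι ℝ)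

def unobservableSubspace (σ : ℕ → Bool) (T : ℕ) : Submodule ℝ (ι → ℝ) :=
  ⨅ s < T, ⨅ (_ : σ s = true), LinearMap.ker (C * A ^ s).mulVecLin

variable {A C} {σ : ℕ → Bool} {T : ℕ}

lemma mem_unobservableSubspace {y : ι → ℝ} :
    y ∈ unobservableSubspace A C σ T ↔ ∀ s < T, σ s = true → (C * A ^ s) *ᵥ y = 0 := by
  simp [unobservableSubspace]

lemma unobservableSubspace_antitone : Antitone (unobservableSubspace A C σ) := fun _ _ hT _ hy =>
  mem_unobservableSubspace.2 fun s hs => mem_unobservableSubspace.1 hy s (by omega)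

lemma unobservableSubspace_congr {σ' : ℕ → Bool} (hσ : ∀ s < T, σ s = σ' s) :
    unobservableSubspace A C σ T = unobservableSubspace A C σ' T := by
  ext y
  simp only [mem_unobservableSubspace]
  exact forall₂_congr fun s hs => by rw [hσ s hs]

lemma isAdjointChain_pow_mulVec {x₀ : ι → ℝ} (hx : ∀ t, σ t = true → (C * A ^ t) *ᵥ x₀ = 0)
    (T : ℕ) : IsAdjointChain Aᵀ Cᵀ (fun s => σ (T - 1 - s)) T fun s => (A ^ (T - s)) *ᵥ x₀ := by
  intro s hs
  refine ⟨?_, fun hσ => ?_⟩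
  · rw [vecMul_transpose, mulVec_mulVec, ← pow_succ', show T - (s + 1) + 1 = T - s by omega]
  · rw [vecMul_transpose, mulVec_mulVec, show T - (s + 1) = T - 1 - s by omega, hx _ hσ]

end Unobservable

section Duality

variable {N n p : ℕ} {A : Matrix (Fin n) (Fin n) ℝ} {C : Matrix (Fin p) (Fin n) ℝ}
  {𝒜 : Automaton N}

lemma Detectable.exists_horizon (hdet : Detectable A C 𝒜) :
    ∃ T, ∀ w, 𝒜.IsRun T w → (stableSubspace Aᵀ).orthogonalBilin (dotProductBilin ℝ ℝ) ⊓
      unobservableSubspace A C (fun s => 𝒜.s (w s)) T = ⊥ := by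
  set S := (stableSubspace Aᵀ).orthogonalBilin (dotProductBilin ℝ ℝ)
  by_contra! hbad
  obtain ⟨v, hv⟩ := exists_forall_of_forall_exists_of_prefix
    (P := fun T w => 𝒜.IsRun T w ∧ S ⊓ unobservableSubspace A C (fun s => 𝒜.s (w s)) T ≠ ⊥)
    (fun hij hP => ⟨hP.1.mono hij,
      ne_bot_of_le_ne_bot hP.2 (inf_le_inf_left _ (unobservableSubspace_antitone hij))⟩)
    (fun {_ v _} hvw hP => ⟨hP.1.congr hvw, by
      rw [← unobservableSubspace_congr (σ := fun s => 𝒜.s (v s)) fun s hs => by rw [hvw s hs]]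
      exact hP.2⟩)
    hbad
  obtain ⟨y, hy0, hy⟩ := Submodule.exists_ne_zero_forall_mem_of_antitone
    (fun _ _ hij => inf_le_inf_left S (unobservableSubspace_antitone hij)) fun T => (hv T).2
  refine hy0 (eq_zero_of_mem_stableSubspace_of_forall_dotProduct_eq_zero (A := A) ?_ fun z hz => ?_)
  · refine hdet _ (Automaton.admissible_of_forall_isRun fun T => (hv T).1) y fun t ht => ?_
    exact mem_unobservableSubspace.1 (hy (t + 1)).2 t (lt_add_one t) ht
  · rw [dotProduct_comm]
    exact (hy 0).1 z hz

lemma Detectable.stabilizable_dual (hdet : Detectable A C 𝒜) : Stabilizable Aᵀ Cᵀ 𝒜.rev := by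
  obtain ⟨T, hT⟩ := hdet.exists_horizon
  rintro σ ⟨v, hv⟩ x₀
  refine exists_tendsto_traj_of_mem_sup Aᵀ Cᵀ σ (T := T) ?_
  suffices htop : LinearMap.range (reachMap Aᵀ Cᵀ σ T) ⊔ stableSubspace Aᵀ = ⊤ by simp [htop]
  by_contra hne
  obtain ⟨y, hy0, hy⟩ := exists_ne_zero_forall_dotProduct_eq_zero hne
  have hrun : 𝒜.IsRun T fun s => v (T - 1 - s) :=
    Automaton.IsRun.reverse (𝒜 := 𝒜.rev) fun s _ => (hv s).1
  refine hy0 ((Submodule.eq_bot_iff _).1 (hT _ hrun) y ⟨fun z hz => ?_, ?_⟩)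
  · change z ⬝ᵥ y = 0
    rw [dotProduct_comm]
    exact hy z (Submodule.mem_sup_right hz)
  · refine mem_unobservableSubspace.2 fun s hs hlabel => ?_
    have hreach := vecMul_eq_zero_of_forall_dotProduct_reachMap_eq_zero Aᵀ Cᵀ σ
      (fun u => hy _ (Submodule.mem_sup_left ⟨u, rfl⟩)) (t := T - 1 - s) (by omega)
      (by rw [(hv _).2]; exact hlabel)
    rwa [show T - 1 - (T - 1 - s) = s by omega, ← transpose_pow, ← transpose_mul,
      vecMul_transpose] at hreach

lemma exists_bounded_adjoint_chains {σ : ℕ → Bool} (hσ : 𝒜.Admissible σ) {x₀ : Fin n → ℝ}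
    (hx : ∀ t, σ t = true → (C * A ^ t) *ᵥ x₀ = 0)
    (hnot : ¬Tendsto (fun t : ℕ => (A ^ t) *ᵥ x₀) atTop (𝓝 0)) :
    ∃ σ', 𝒜.rev.Admissible σ' ∧ ∃ K, ∀ T, ∃ η : ℕ → Fin n → ℝ,
      IsAdjointChain Aᵀ Cᵀ σ' T η ∧ ‖η T‖ ≤ K ∧ ‖η 0‖ = 1 := by
  obtain ⟨v, hv⟩ := hσ
  obtain ⟨K, hK⟩ := exists_frequently_le_mul_of_not_tendsto (c := fun t => ‖(A ^ t) *ᵥ x₀‖)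
    (fun _ => norm_nonneg _) (by rwa [tendsto_zero_iff_norm_tendsto_zero] at hnot)
  set P : ℕ → (ℕ → Fin N) → Prop := fun T w => 𝒜.rev.IsRun T w ∧ ∃ η : ℕ → Fin n → ℝ,
    IsAdjointChain Aᵀ Cᵀ (fun s => 𝒜.s (w s)) T η ∧ (∀ s ≤ T, ‖η s‖ ≤ K) ∧ ‖η 0‖ = 1
  have hP : ∀ L, ∃ w, P L w := by
    intro L
    obtain ⟨T, hLT, hpos, hle⟩ := hK L
    have hrun : 𝒜.rev.IsRun T fun s => v (T - 1 - s) :=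
      Automaton.IsRun.reverse fun s _ => (hv s).1
    have hchain := ((isAdjointChain_pow_mulVec hx T).smul ‖(A ^ T) *ᵥ x₀‖⁻¹).congr
      (σ' := fun s => 𝒜.s (v (T - 1 - s))) fun s _ => (hv _).2
    refine ⟨_, hrun.mono hLT, _, hchain.mono hLT, fun s hs => ?_, ?_⟩
    · simpa [norm_smul, inv_mul_le_iff₀ hpos, mul_comm] using hle (T - s) (by omega)
    · simp [norm_smul, hpos.ne']
  obtain ⟨w, hw⟩ := exists_forall_of_forall_exists_of_prefix (P := P)
    (fun hij hP => ⟨hP.1.mono hij, hP.2.elim fun η hη =>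
      ⟨η, hη.1.mono hij, fun s hs => hη.2.1 s (hs.trans hij), hη.2.2⟩⟩)
    (fun hvw hP => ⟨hP.1.congr hvw, hP.2.elim fun η hη =>
      ⟨η, hη.1.congr fun s hs => by simp only [hvw s hs], hη.2⟩⟩)
    hP
  refine ⟨_, Automaton.admissible_of_forall_isRun fun T => (hw T).1, K, fun T => ?_⟩
  obtain ⟨η, hη, hbd, h0⟩ := (hw T).2
  exact ⟨η, hη, hbd T le_rfl, h0⟩

lemma Detectable.of_stabilizable_dual (h : Stabilizable Aᵀ Cᵀ 𝒜.rev) : Detectable A C 𝒜 := by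
  intro σ hσ x₀ hx
  by_contra hnot
  obtain ⟨σ', hσ', K, hchains⟩ := exists_bounded_adjoint_chains hσ hx hnot
  choose η hη hK hnorm using hchains
  have hlim := (tendsto_zero_of_isAdjointChain_of_norm_le (h σ' hσ') hη hK).norm
  simp only [hnorm, norm_zero] at hlim
  exact one_ne_zero (tendsto_nhds_unique tendsto_const_nhds hlim)

end Duality

/-- `(A,C,𝒜)` is detectable iff the dual system `(Aᵀ, Cᵀ, 𝒜ʳ)` is stabilizable. -/
theorem detectable_iff_dual_stabilizable {N n p : ℕ} (A : Matrix (Fin n) (Fin n) ℝ)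
    (C : Matrix (Fin p) (Fin n) ℝ) (𝒜 : Automaton N) :
    Detectable A C 𝒜 ↔ Stabilizable A.transpose C.transpose 𝒜.rev :=
  ⟨Detectable.stabilizable_dual, Detectable.of_stabilizable_dual⟩
end

section
/- The system with varying delays (A,B,𝒟) is uncontrollable if and only if there exists a delay signal d : ℕ → 𝒟 such that for all t ∈ ℕ the controllability matrix C̄_d(t) has rank strictly less than n. -/
open Matrix Filter

lemma delayTraj_formula {n m : ℕ} (A : Matrix (Fin n) (Fin n) ℝ) (B : Matrix (Fin n) (Fin m) ℝ)
    (d : ℕ → ℕ) (u : ℕ → Fin m → ℝ) (x₀ : Fin n → ℝ) (T : ℕ) :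
    delayTraj A B d u x₀ T = (A ^ T).mulVec x₀ +
      ∑ j ∈ Finset.range T,
        (if j + 1 + d j ≤ T then (A ^ (T - (j + 1) - d j) * B).mulVec (u j) else 0) := by
  induction T with
  | zero => simp [delayTraj]
  | succ T ih =>
    rw [delayTraj, ih, Matrix.mulVec_add]
    have h1 : A.mulVec ((A ^ T).mulVec x₀) = (A ^ (T+1)).mulVec x₀ := by
      rw [Matrix.mulVec_mulVec, ← pow_succ']
    rw [h1]
    have h2 : A.mulVec (∑ j ∈ Finset.range T,
        (if j + 1 + d j ≤ T then (A ^ (T - (j + 1) - d j) * B).mulVec (u j) else 0)) =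
        ∑ j ∈ Finset.range T,
        (if j + 1 + d j ≤ T then (A ^ (T + 1 - (j + 1) - d j) * B).mulVec (u j) else 0) := by
      have := map_sum A.mulVecLin (fun j =>
        (if j + 1 + d j ≤ T then (A ^ (T - (j + 1) - d j) * B).mulVec (u j) else 0))
        (Finset.range T)
      simp only [Matrix.mulVecLin_apply] at this
      rw [this]
      refine Finset.sum_congr rfl fun j hj => ?_
      split_ifs with h
      · have he : T + 1 - (j + 1) - d j = (T - (j + 1) - d j) + 1 := by omega
        rw [he, pow_succ']
        simp [Matrix.mulVec_mulVec, Matrix.mul_assoc]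
      · simp
    rw [h2]
    have h3 : ∀ j, j < T + 1 →
        (if j + 1 + d j ≤ T + 1 then (A ^ (T + 1 - (j + 1) - d j) * B).mulVec (u j) else 0) =
        (if j + 1 + d j ≤ T then (A ^ (T + 1 - (j + 1) - d j) * B).mulVec (u j) else 0) +
        (if j + d j = T then B.mulVec (u j) else 0) := by
      intro j hj
      rcases le_or_gt (j + 1 + d j) T with h | h
      · rw [if_pos h, if_pos (by omega), if_neg (by omega), add_zero]
      by_cases h' : j + d j = T
      · rw [if_pos (by omega), if_neg (by omega), if_pos (by omega), zero_add]
        have he0 : T + 1 - (j+1) - d j = 0 := by omega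
        rw [he0, pow_zero, Matrix.one_mul]
      · rw [if_neg (by omega), if_neg (by omega), if_neg (by omega), add_zero]
    rw [Finset.sum_congr rfl (fun j hj => h3 j (Finset.mem_range.mp hj)), Finset.sum_add_distrib]
    have h4 : ∑ j ∈ Finset.range (T+1),
        (if j + 1 + d j ≤ T then (A ^ (T + 1 - (j + 1) - d j) * B).mulVec (u j) else 0) =
        ∑ j ∈ Finset.range T,
        (if j + 1 + d j ≤ T then (A ^ (T + 1 - (j + 1) - d j) * B).mulVec (u j) else 0) := by
      rw [Finset.sum_range_succ, if_neg (by omega), add_zero]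
    rw [h4]
    abel

lemma sum_eq_mulVec {n m : ℕ} (A : Matrix (Fin n) (Fin n) ℝ) (B : Matrix (Fin n) (Fin m) ℝ)
    (d : ℕ → ℕ) (u : ℕ → Fin m → ℝ) (T : ℕ) :
    ∑ j ∈ Finset.range T,
        (if j + 1 + d j ≤ T then (A ^ (T - (j + 1) - d j) * B).mulVec (u j) else 0) =
      (delayCtrbMat A B d T).mulVec (fun jl => u jl.1 jl.2) := by
  funext k
  rw [Matrix.mulVec]
  show _ = ∑ jl : Fin T × Fin m, delayCtrbMat A B d T k jl * u jl.1 jl.2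
  rw [Fintype.sum_prod_type]
  rw [Finset.sum_apply]
  rw [← Fin.sum_univ_eq_sum_range (fun j =>
    (if j + 1 + d j ≤ T then (A ^ (T - (j + 1) - d j) * B).mulVec (u j) else 0) k) T]
  refine Finset.sum_congr rfl fun j _ => ?_
  simp only [delayCtrbMat]
  split_ifs with h
  · rw [Matrix.mulVec]; rfl
  · simp

lemma rank_eq_finrank_range {n : ℕ} {ι : Type} [Fintype ι] (M : Matrix (Fin n) ι ℝ) :
    M.rank = Module.finrank ℝ (LinearMap.range M.mulVecLin) := rfl

/-- The system with varying delays `(A,B,𝒟)` is uncontrollable iff there is a delay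
signal `d : ℕ → 𝒟` such that `C̄_d(t)` is rank-deficient for every `t`. -/
theorem delay_uncontrollable_iff {n m : ℕ} (A : Matrix (Fin n) (Fin n) ℝ)
    (B : Matrix (Fin n) (Fin m) ℝ) (𝒟 : Finset ℕ) :
    ¬ DelayControllable A B 𝒟 ↔
      ∃ d : ℕ → ℕ, (∀ t : ℕ, d t ∈ 𝒟) ∧
        ∀ t : ℕ, (delayCtrbMat A B d t).rank < n := by
  constructor
  · intro hnc
    unfold DelayControllable at hnc
    push_neg at hnc
    obtain ⟨d, hd, x₀, xf, hfail⟩ := hnc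
    refine ⟨d, hd, fun t => ?_⟩
    by_contra hrank
    push_neg at hrank
    have hr : (delayCtrbMat A B d t).rank = n :=
      le_antisymm ((delayCtrbMat A B d t).rank_le_card_height.trans_eq (Fintype.card_fin n)) hrank
    have htop : LinearMap.range (delayCtrbMat A B d t).mulVecLin = ⊤ := by
      apply Submodule.eq_top_of_finrank_eq
      rw [← rank_eq_finrank_range, hr, Module.finrank_fin_fun]
    have hmem : xf - (A ^ t).mulVec x₀ ∈ LinearMap.range (delayCtrbMat A B d t).mulVecLin := by
      rw [htop]; trivial
    obtain ⟨v, hv⟩ := hmem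
    set u : ℕ → Fin m → ℝ := fun j l => if h : j < t then v (⟨j, h⟩, l) else 0 with hu
    apply hfail u t
    rw [delayTraj_formula, sum_eq_mulVec]
    have huv : (fun jl : Fin t × Fin m => u jl.1 jl.2) = v := by
      funext jl
      simp only [hu, jl.1.isLt, dif_pos]
    rw [huv]
    rw [Matrix.mulVecLin_apply] at hv
    rw [hv, add_sub_cancel]
  · rintro ⟨d, hd, hr⟩ hc
    have hS : ∀ t, LinearMap.range (delayCtrbMat A B d t).mulVecLin ≠ ⊤ := by
      intro t htop
      have := hr t
      rw [rank_eq_finrank_range, htop, finrank_top, Module.finrank_fin_fun] at this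
      exact lt_irrefl n this
    have hex : ∃ xf : Fin n → ℝ, ∀ t, xf ∉ LinearMap.range (delayCtrbMat A B d t).mulVecLin := by
      by_contra hno
      push_neg at hno
      have hcover : ⋃ t, ((LinearMap.range (delayCtrbMat A B d t).mulVecLin : Submodule ℝ (Fin n → ℝ)) : Set (Fin n → ℝ)) = Set.univ := by
        apply Set.eq_univ_of_forall
        intro x
        obtain ⟨t, ht⟩ := hno x
        exact Set.mem_iUnion.mpr ⟨t, ht⟩
      obtain ⟨t, x, hx⟩ := nonempty_interior_of_iUnion_of_closed
        (fun t => (LinearMap.range (delayCtrbMat A B d t).mulVecLin).closed_of_finiteDimensional)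
        hcover
      exact hS t ((LinearMap.range (delayCtrbMat A B d t).mulVecLin).eq_top_of_nonempty_interior' ⟨x, hx⟩)
    obtain ⟨xf, hxf⟩ := hex
    obtain ⟨u, T, hT⟩ := hc d hd 0 xf
    apply hxf T
    rw [delayTraj_formula, sum_eq_mulVec, Matrix.mulVec_zero, zero_add] at hT
    exact ⟨_, by rw [Matrix.mulVecLin_apply, hT]⟩
end

section
/- For every delay signal d : ℕ → ℕ and every t ∈ ℕ, the column space of the reachability matrix C_{τ_d}(t) = [τ_d(t−1)B, τ_d(t−2)AB, ..., τ_d(0)A^{t−1}B] of the dropout model driven by the actuation signal τ_d equals the column space of the controllability matrix C̄_d(t) of the system with varying delays. -/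
open Matrix Filter

namespace Matrix

variable {R : Type*} [CommSemiring R] {m ι κ : Type*} [Fintype ι] [Fintype κ]

theorem range_mulVecLin_le_of_col_eq_zero_or_mem (M : Matrix m ι R) (N : Matrix m κ R)
    (h : ∀ i, M.col i = 0 ∨ M.col i ∈ Set.range N.col) :
    LinearMap.range M.mulVecLin ≤ LinearMap.range N.mulVecLin := by
  rw [range_mulVecLin, range_mulVecLin, Submodule.span_le]
  rintro _ ⟨i, rfl⟩
  obtain h0 | ⟨j, hj⟩ := h i
  · simp [h0]
  · exact hj ▸ Submodule.subset_span ⟨j, rfl⟩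

end Matrix

theorem actuation_eq_true_iff {d : ℕ → ℕ} {s : ℕ} :
    actuation d s = true ↔ ∃ t', t' + d t' = s := by
  simp [actuation]

/-- Block column `k` of `C_{τ_d}(t)` is switched on exactly when some input `u(j)` arrives at
time `t - 1 - k`, and `A^k B` is then block column `j` of `C̄_d(t)`. -/
theorem actuation_sub_one_sub_iff {d : ℕ → ℕ} {t k : ℕ} (hk : k < t) :
    actuation d (t - 1 - k) = true ↔ ∃ j, j + 1 + d j ≤ t ∧ t - (j + 1) - d j = k := by
  rw [actuation_eq_true_iff]
  constructor
  · rintro ⟨j, hj⟩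
    exact ⟨j, by omega, by omega⟩
  · rintro ⟨j, hjt, rfl⟩
    exact ⟨j, by omega⟩

section

variable {n m : ℕ} (A : Matrix (Fin n) (Fin n) ℝ) (B : Matrix (Fin n) (Fin m) ℝ)
  (d : ℕ → ℕ) (t : ℕ)

theorem reachMat_actuation_col_eq_zero_or_mem (i : Fin t × Fin m) :
    (reachMat A B (actuation d) t).col i = 0 ∨
      (reachMat A B (actuation d) t).col i ∈ Set.range (delayCtrbMat A B d t).col := by
  obtain ⟨⟨k, hk⟩, l⟩ := i
  by_cases hτ : actuation d (t - 1 - k) = true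
  · obtain ⟨j, hjt, hjk⟩ := (actuation_sub_one_sub_iff hk).mp hτ
    refine Or.inr ⟨(⟨j, by omega⟩, l), funext fun r => ?_⟩
    simp [reachMat, delayCtrbMat, hτ, hjt, hjk]
  · exact Or.inl (funext fun r => by simp [reachMat, hτ])

theorem delayCtrbMat_col_eq_zero_or_mem (i : Fin t × Fin m) :
    (delayCtrbMat A B d t).col i = 0 ∨
      (delayCtrbMat A B d t).col i ∈ Set.range (reachMat A B (actuation d) t).col := by
  obtain ⟨⟨j, hj⟩, l⟩ := i
  by_cases hjt : j + 1 + d j ≤ t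
  · have hk : t - (j + 1) - d j < t := by omega
    have hτ := (actuation_sub_one_sub_iff hk).mpr ⟨j, hjt, rfl⟩
    refine Or.inr ⟨(⟨_, hk⟩, l), funext fun r => ?_⟩
    simp [reachMat, delayCtrbMat, hτ, hjt]
  · exact Or.inl (funext fun r => by simp [delayCtrbMat, hjt])

end

/-- For every delay signal `d` and every `t`, the column space of the reachability
matrix `C_{τ_d}(t)` of the dropout model driven by the actuation signal `τ_d` coincides
with the column space of the controllability matrix `C̄_d(t)` of the system with varying
delays. -/
theorem reachMat_actuation_range_eq {n m : ℕ} (A : Matrix (Fin n) (Fin n) ℝ)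
    (B : Matrix (Fin n) (Fin m) ℝ) (d : ℕ → ℕ) (t : ℕ) :
    LinearMap.range (reachMat A B (actuation d) t).mulVecLin =
    LinearMap.range (delayCtrbMat A B d t).mulVecLin :=
  le_antisymm
    (Matrix.range_mulVecLin_le_of_col_eq_zero_or_mem _ _
      (reachMat_actuation_col_eq_zero_or_mem A B d t))
    (Matrix.range_mulVecLin_le_of_col_eq_zero_or_mem _ _
      (delayCtrbMat_col_eq_zero_or_mem A B d t))
end
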